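/- Let L : ℝ^{pq} → ℝ be twice continuously differentiable with ρ₋‖z‖₂² ≤ zᵀ∇²L(β)z for every β and every z with ‖z‖_{0,2} ≤ s, let W : ℝ^{pq} → ℝ be differentiable, concave, with η₋-Lipschitz gradient, let λ ≥ 0, and set L̃ = L + W and F_λ(β) = L̃(β) + λ‖β‖_{1,2}. Let β, β' ∈ ℝ^{pq} satisfy |{j : β_j ≠ 0 or β'_j ≠ 0}| ≤ s, and let ξ ∈ ℝ^{pq} be any subgradient of ‖·‖_{1,2} at β, i.e. ‖u‖_{1,2} ≥ ‖β‖_{1,2} + ⟨u − β, ξ⟩ for all u ∈ ℝ^{pq}. Then F_λ(β') − F_λ(β) − ⟨β'−β, ∇L̃(β) + λξ⟩ ≥ ((ρ₋ − η₋)/2)‖β'−β‖₂². -/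

import Mathlib

/-!
Write `v = β' - β`; it has at most `s` nonzero blocks, so the restricted Hessian bound applies
along the whole segment from `β` to `β'` and gives `L` the quadratic lower bound
`L β + ⟨∇L β, v⟩ + ρ₋‖v‖²/2`. The `η₋`-Lipschitz gradient of `W` limits how fast the slope of
`W` can drop along the segment, which gives the descent-lemma bound `W β + ⟨∇W β, v⟩ - η₋‖v‖²/2`.
Both bounds come from integrating a lower bound on the derivative of `t ↦ f (β + t • v)` over
`[0, 1]`. The subgradient inequality at `u = β'`, scaled by `λ ≥ 0`, handles the penalty.
-/

open RealInnerProductSpace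
noncomputable section

/-- The `j`-th block (in `ℝ^q`) of a vector `β ∈ ℝ^{pq}`. -/
def blk {p q : ℕ} (β : EuclideanSpace ℝ (Fin p × Fin q)) (j : Fin p) :
    EuclideanSpace ℝ (Fin q) := WithLp.toLp 2 (fun k => β (j, k))

/-- The group `ℓ_{0,2}` "norm": the number of nonzero blocks. -/
def blockCount {p q : ℕ} (β : EuclideanSpace ℝ (Fin p × Fin q)) : ℕ :=
  {j : Fin p | blk β j ≠ 0}.ncard

/-- The group `ℓ_{1,2}` norm: the sum of the Euclidean norms of the blocks. -/
def groupNorm {p q : ℕ} (β : EuclideanSpace ℝ (Fin p × Fin q)) : ℝ :=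
  ∑ j, ‖blk β j‖

open Set

theorem add_add_half_le_of_affine_le_deriv {g g' : ℝ → ℝ} {c : ℝ}
    (hg : ∀ t, HasDerivAt g (g' t) t) (hg' : ∀ t ∈ Ioo (0 : ℝ) 1, g' 0 + c * t ≤ g' t) :
    g 0 + g' 0 + c / 2 ≤ g 1 := by
  set h : ℝ → ℝ := fun t => g t - g' 0 * t - c / 2 * t ^ 2
  have hh : ∀ t, HasDerivAt h (g' t - g' 0 - c * t) t := fun t => by
    refine (((hg t).sub ((hasDerivAt_id t).const_mul (g' 0))).sub
      ((hasDerivAt_pow 2 t).const_mul (c / 2))).congr_deriv ?_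
    norm_num
    ring
  have hmono : MonotoneOn h (Icc 0 1) :=
    monotoneOn_of_deriv_nonneg (convex_Icc 0 1)
      (fun t _ => (hh t).continuousAt.continuousWithinAt)
      (fun t _ => (hh t).differentiableAt.differentiableWithinAt)
      (fun t ht => by
        rw [interior_Icc] at ht
        rw [(hh t).deriv]
        linarith [hg' t ht])
  have := hmono (left_mem_Icc.2 zero_le_one) (right_mem_Icc.2 zero_le_one) zero_le_one
  simp only [h] at this
  linarith

section LineRestriction

variable {E F : Type*} [NormedAddCommGroup E] [NormedAddCommGroup F] [NormedSpace ℝ F]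

theorem hasDerivAt_comp_add_smul [NormedSpace ℝ E] {f : E → F} {x v : E} {t : ℝ}
    (hf : DifferentiableAt ℝ f (x + t • v)) :
    HasDerivAt (fun t : ℝ => f (x + t • v)) (fderiv ℝ f (x + t • v) v) t := by
  have hline : HasDerivAt (fun t : ℝ => x + t • v) v t := by
    simpa using ((hasDerivAt_id t).smul_const v).const_add x
  exact hf.hasFDerivAt.comp_hasDerivAt t hline

theorem add_fderiv_add_half_le_of_le_iteratedFDeriv_two [NormedSpace ℝ E] {f : E → ℝ}
    (hf : ContDiff ℝ 2 f) (x v : E) {c : ℝ} (hc : ∀ y, c ≤ iteratedFDeriv ℝ 2 f y ![v, v]) :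
    f x + fderiv ℝ f x v + c / 2 ≤ f (x + v) := by
  have hf1 : Differentiable ℝ f := hf.differentiable (by norm_num)
  have hf2 : Differentiable ℝ (fderiv ℝ f) :=
    (hf.fderiv_right (m := 1) (by norm_num)).differentiable (by norm_num)
  set g' : ℝ → ℝ := fun t => fderiv ℝ f (x + t • v) v
  have hg'' : ∀ t, HasDerivAt g' (fderiv ℝ (fderiv ℝ f) (x + t • v) v v) t := fun t => by
    simpa using (hasDerivAt_comp_add_smul (hf2 _)).clm_apply (hasDerivAt_const t v)
  have hg''_ge : ∀ t, c ≤ deriv g' t := fun t => by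
    simpa [(hg'' t).deriv, iteratedFDeriv_two_apply] using hc (x + t • v)
  have hg'_growth : ∀ t ∈ Ioo (0 : ℝ) 1, g' 0 + c * t ≤ g' t := fun t ht => by
    have := mul_sub_le_image_sub_of_le_deriv (fun t => (hg'' t).differentiableAt) hg''_ge
      ht.1.le
    rw [sub_zero] at this
    linarith
  have := add_add_half_le_of_affine_le_deriv (g := fun t : ℝ => f (x + t • v))
    (fun t => hasDerivAt_comp_add_smul (hf1 _)) hg'_growth
  simpa [g'] using this

theorem add_inner_gradient_sub_le_of_lipschitzWith [InnerProductSpace ℝ E] [CompleteSpace E]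
    {f : E → ℝ} (hf : Differentiable ℝ f) {K : NNReal} (hK : LipschitzWith K (gradient f))
    (x v : E) : f x + ⟪gradient f x, v⟫ - K / 2 * ‖v‖ ^ 2 ≤ f (x + v) := by
  have hline : ∀ t : ℝ,
      HasDerivAt (fun t : ℝ => f (x + t • v)) ⟪gradient f (x + t • v), v⟫ t := fun t => by
    rw [inner_gradient_left]
    exact hasDerivAt_comp_add_smul (hf _)
  have := add_add_half_le_of_affine_le_deriv hline (c := -(K * ‖v‖ ^ 2)) (fun t ht => by
    have hlip : ‖gradient f (x + t • v) - gradient f x‖ ≤ K * (t * ‖v‖) := by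
      simpa [norm_smul, abs_of_pos ht.1] using hK.norm_sub_le (x + t • v) x
    have hcs := real_inner_le_norm (gradient f x - gradient f (x + t • v)) v
    rw [norm_sub_rev, inner_sub_left] at hcs
    simp only [zero_smul, add_zero]
    nlinarith [norm_nonneg v])
  simp only [zero_smul, one_smul, add_zero] at this
  linarith

end LineRestriction

theorem blk_sub {p q : ℕ} (β β' : EuclideanSpace ℝ (Fin p × Fin q)) (j : Fin p) :
    blk (β' - β) j = blk β' j - blk β j :=
  rfl

theorem blockCount_sub_le {p q : ℕ} (β β' : EuclideanSpace ℝ (Fin p × Fin q)) :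
    blockCount (β' - β) ≤ {j : Fin p | blk β j ≠ 0 ∨ blk β' j ≠ 0}.ncard := by
  refine ncard_le_ncard (fun j hj => ?_) (toFinite _)
  simp only [mem_ofPred_eq] at hj ⊢
  by_contra! h
  exact hj (by rw [blk_sub, h.1, h.2, sub_zero])

theorem regularized_objective_rsc_general {p q : ℕ} (s : ℕ)
    (L W : EuclideanSpace ℝ (Fin p × Fin q) → ℝ) (hL : ContDiff ℝ 2 L)
    (ρm : ℝ)
    (hHess : ∀ β z : EuclideanSpace ℝ (Fin p × Fin q), blockCount z ≤ s →
      ρm * ‖z‖ ^ 2 ≤ iteratedFDeriv ℝ 2 L β ![z, z])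
    (hW : Differentiable ℝ W)
    (η : ℝ) (hη : 0 ≤ η) (hWLip : LipschitzWith η.toNNReal (gradient W))
    (lam : ℝ) (hlam : 0 ≤ lam)
    (β β' : EuclideanSpace ℝ (Fin p × Fin q))
    (hsupp : {j : Fin p | blk β j ≠ 0 ∨ blk β' j ≠ 0}.ncard ≤ s)
    (ξ : EuclideanSpace ℝ (Fin p × Fin q))
    (hξ : ∀ u : EuclideanSpace ℝ (Fin p × Fin q),
      groupNorm β + ⟪u - β, ξ⟫ ≤ groupNorm u) :
    (ρm - η) / 2 * ‖β' - β‖ ^ 2 ≤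
      ((L β' + W β') + lam * groupNorm β') - ((L β + W β) + lam * groupNorm β) -
        ⟪β' - β, gradient (fun b => L b + W b) β + lam • ξ⟫ := by
  set v := β' - β
  have hβ' : β + v = β' := add_sub_cancel β β'
  have hLv := add_fderiv_add_half_le_of_le_iteratedFDeriv_two hL β v
    (fun y => hHess y v ((blockCount_sub_le β β').trans hsupp))
  have hWv := add_inner_gradient_sub_le_of_lipschitzWith hW hWLip β v
  rw [hβ'] at hLv hWv
  rw [Real.coe_toNNReal _ hη] at hWv
  have hpen := mul_le_mul_of_nonneg_left (hξ β') hlam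
  have hgrad : ⟪v, gradient (fun b => L b + W b) β⟫ = fderiv ℝ L β v + ⟪gradient W β, v⟫ := by
    rw [real_inner_comm, inner_gradient_left, inner_gradient_left,
      fderiv_fun_add ((hL.differentiable (by norm_num)) β) (hW β)]
    rfl
  rw [inner_add_right, hgrad, real_inner_smul_right]
  rw [mul_add] at hpen
  linarith

/-- Restricted strong convexity of the regularized objective
`F_λ(β) = L(β) + W(β) + λ‖β‖_{1,2}` along a subgradient of the group norm. -/
theorem regularized_objective_rsc {p q : ℕ} (s : ℕ) (hs : 0 < s)
    (L W : EuclideanSpace ℝ (Fin p × Fin q) → ℝ) (hL : ContDiff ℝ 2 L)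
    (ρm : ℝ)
    (hHess : ∀ β z : EuclideanSpace ℝ (Fin p × Fin q), blockCount z ≤ s →
      ρm * ‖z‖ ^ 2 ≤ iteratedFDeriv ℝ 2 L β ![z, z])
    (hW : Differentiable ℝ W) (hWconc : ConcaveOn ℝ Set.univ W)
    (η : ℝ) (hη : 0 ≤ η) (hWLip : LipschitzWith η.toNNReal (gradient W))
    (lam : ℝ) (hlam : 0 ≤ lam)
    (β β' : EuclideanSpace ℝ (Fin p × Fin q))
    (hsupp : {j : Fin p | blk β j ≠ 0 ∨ blk β' j ≠ 0}.ncard ≤ s)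
    (ξ : EuclideanSpace ℝ (Fin p × Fin q))
    (hξ : ∀ u : EuclideanSpace ℝ (Fin p × Fin q),
      groupNorm β + ⟪u - β, ξ⟫ ≤ groupNorm u) :
    (ρm - η) / 2 * ‖β' - β‖ ^ 2 ≤
      ((L β' + W β') + lam * groupNorm β') - ((L β + W β) + lam * groupNorm β) -
        ⟪β' - β, gradient (fun b => L b + W b) β + lam • ξ⟫ :=
  regularized_objective_rsc_general s L W hL ρm hHess hW η hη hWLip lam hlam β β' hsupp ξ hξ
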